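/- arXiv:1410.0989 — 3 statements merged into one kernel-verified Lean document; each statement's English description precedes it below -/
import Mathlib

section
/- Let F be a probability distribution supported on a set K ⊆ ℝⁿ, and let x, x' be independent samples from F. If P(‖x - x'‖₂ < δ) ≤ η for some η ∈ (0,1) and δ > 0, then there exists a δ-packing of K of cardinality at least η^(-1/2), i.e., a finite set X ⊆ K with |X| ≥ η^(-1/2) such that any two distinct points of X are at distance at least δ. -/
/-!
Draw `q = ⌈η^(-1/2)⌉` independent samples from `F`. Each of the `q.choose 2` pairs of samples is
`δ`-close with probability at most `η`, and `q.choose 2 * η < 1`, so by the union bound some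
outcome has all samples in `K` and pairwise at distance at least `δ`; these form the packing.
-/

open MeasureTheory ProbabilityTheory Set
open scoped ENNReal

theorem MeasureTheory.Measure.map_eval_prod_eval_pi {ι : Type*} [Fintype ι] {E : ι → Type*}
    [∀ i, MeasurableSpace (E i)] (μ : ∀ i, Measure (E i)) [∀ i, IsProbabilityMeasure (μ i)]
    {i j : ι} (hij : i ≠ j) :
    (Measure.pi μ).map (fun ω ↦ (ω i, ω j)) = (μ i).prod (μ j) := by
  have hindep := (iIndepFun_pi (X := fun _ ↦ id) (fun _ ↦ aemeasurable_id) (μ := μ)).indepFun hij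
  rw [hindep.map_prod_eq_prod_map_map (measurable_pi_apply i).aemeasurable
    (measurable_pi_apply j).aemeasurable, (measurePreserving_eval μ i).map_eq,
    (measurePreserving_eval μ j).map_eq]

theorem MeasureTheory.measure_iUnion_lt_le_choose_two_mul {Ω : Type*} [MeasurableSpace Ω]
    (μ : Measure Ω) {q : ℕ} (A : Fin q → Fin q → Set Ω) {ε : ℝ≥0∞}
    (hA : ∀ i j, i < j → μ (A i j) ≤ ε) :
    μ (⋃ (i) (j) (_ : i < j), A i j) ≤ q.choose 2 * ε := by
  let pairs : Finset (Fin q × Fin q) := {p ∈ .univ ×ˢ .univ | p.1 < p.2}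
  have hunion : ⋃ (i) (j) (_ : i < j), A i j = ⋃ p ∈ pairs, A p.1 p.2 := by
    ext; simp [pairs]
  calc μ (⋃ (i) (j) (_ : i < j), A i j) ≤ ∑ p ∈ pairs, μ (A p.1 p.2) :=
        hunion ▸ measure_biUnion_finset_le _ _
    _ ≤ pairs.card • ε := Finset.sum_le_card_nsmul _ _ _ fun p hp ↦ hA _ _ (by simp_all [pairs])
    _ = q.choose 2 * ε := by
        rw [nsmul_eq_mul, Finset.card_product_filter_lt, Finset.card_univ, Fintype.card_fin]

theorem MeasureTheory.exists_forall_mem_forall_ne_notMem_of_choose_two_mul_lt_one {E : Type*}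
    [MeasurableSpace E] (F : Measure E) [IsProbabilityMeasure F] {K : Set E}
    (hK : ∀ᵐ x ∂F, x ∈ K) {C : Set (E × E)} (hC : MeasurableSet C)
    (hCsymm : ∀ x y, (x, y) ∈ C → (y, x) ∈ C) (q : ℕ) (hq : q.choose 2 * F.prod F C < 1) :
    ∃ ω : Fin q → E, (∀ i, ω i ∈ K) ∧ ∀ i j, i ≠ j → (ω i, ω j) ∉ C := by
  set μ := Measure.pi fun _ : Fin q ↦ F
  set bad := ⋃ (i : Fin q) (j) (_ : i < j), {ω : Fin q → E | (ω i, ω j) ∈ C}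
  have hpair (i j : Fin q) (hij : i ≠ j) : μ {ω | (ω i, ω j) ∈ C} = F.prod F C := by
    rw [← Measure.map_eval_prod_eval_pi (fun _ ↦ F) hij,
      Measure.map_apply (by fun_prop) hC]
    rfl
  have hbad : μ bad < 1 :=
    (measure_iUnion_lt_le_choose_two_mul μ _ fun i j hij ↦ (hpair i j hij.ne).le).trans_lt hq
  have hgood : ∃ᵐ ω ∂μ, ω ∉ bad := by
    rw [frequently_ae_iff]
    intro h
    have := measure_univ_le_add_compl bad (μ := μ)
    rw [measure_univ, compl_def, h, add_zero] at this
    exact hbad.not_ge this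
  have hK' : ∀ᵐ ω ∂μ, ∀ i, ω i ∈ K :=
    ae_all_iff.2 fun i ↦ Measure.tendsto_eval_ae_ae hK
  obtain ⟨ω, hω, hωK⟩ := (hgood.and_eventually hK').exists
  refine ⟨ω, hωK, fun i j hij hclose ↦ hω ?_⟩
  rcases hij.lt_or_gt with h | h
  · exact mem_iUnion₂.2 ⟨i, j, mem_iUnion.2 ⟨h, hclose⟩⟩
  · exact mem_iUnion₂.2 ⟨j, i, mem_iUnion.2 ⟨h, hCsymm _ _ hclose⟩⟩

theorem MeasureTheory.exists_finset_card_eq_dist_le_of_choose_two_mul_lt_one {E : Type*}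
    [MetricSpace E] [MeasurableSpace E] [OpensMeasurableSpace E] [SecondCountableTopology E]
    (F : Measure E) [IsProbabilityMeasure F] {K : Set E} (hK : ∀ᵐ x ∂F, x ∈ K) {δ : ℝ}
    (hδ : 0 < δ) (q : ℕ) (hq : q.choose 2 * F.prod F {p | dist p.1 p.2 < δ} < 1) :
    ∃ X : Finset E, ↑X ⊆ K ∧ X.card = q ∧ ∀ x ∈ X, ∀ y ∈ X, x ≠ y → δ ≤ dist x y := by
  classical
  obtain ⟨ω, hωK, hω⟩ := exists_forall_mem_forall_ne_notMem_of_choose_two_mul_lt_one F hK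
    (measurableSet_lt (by fun_prop) measurable_const) (fun x y h ↦ by simpa [dist_comm] using h)
    q hq
  have hsep (i j : Fin q) (hij : i ≠ j) : δ ≤ dist (ω i) (ω j) := not_lt.1 (hω i j hij)
  have hinj : Function.Injective ω := fun i j h ↦ by
    by_contra hij
    simpa [h] using (hsep i j hij).trans_lt' hδ
  refine ⟨Finset.univ.image ω, by simpa [range_subset_iff] using hωK, ?_, ?_⟩
  · simp [Finset.card_image_of_injective _ hinj]
  · simp only [Finset.mem_image, Finset.mem_univ, true_and]
    rintro _ ⟨i, rfl⟩ _ ⟨j, rfl⟩ hij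
    exact hsep i j fun h ↦ hij (h ▸ rfl)

theorem choose_two_ceil_rpow_neg_half_mul_lt_one {η : ℝ} (hη0 : 0 < η) (hη1 : η < 1) :
    (⌈η ^ (-(1 : ℝ) / 2)⌉₊.choose 2 : ℝ) * η < 1 := by
  set r := η ^ (-(1 : ℝ) / 2)
  set q := ⌈r⌉₊
  have hr0 : 0 < r := Real.rpow_pos_of_pos hη0 _
  have hrrη : r * r * η = 1 := by
    rw [← Real.rpow_add hη0, ← Real.rpow_add_one hη0.ne']; norm_num
  have hrη : r * η < 1 := by
    rw [← Real.rpow_add_one hη0.ne']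
    exact Real.rpow_lt_one hη0.le hη1 (by norm_num)
  have hq1 : (1 : ℝ) ≤ q := by exact_mod_cast Nat.one_le_iff_ne_zero.2 (Nat.ceil_pos.2 hr0).ne'
  have hqr : (q : ℝ) < r + 1 := Nat.ceil_lt_add_one hr0.le
  have hqq : (q : ℝ) * (q - 1) ≤ (r + 1) * r := by
    gcongr; linarith
  rw [Nat.cast_choose_two]
  nlinarith

/-- Random packing lemma: if two independent samples from a distribution `F`
supported on `K` are at distance less than `δ` with probability at most `η`, then `K`
contains a `δ`-packing of cardinality at least `η^(-1/2)`. -/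
theorem stmt0 (n : ℕ) (K : Set (EuclideanSpace ℝ (Fin n)))
    (F : Measure (EuclideanSpace ℝ (Fin n))) [IsProbabilityMeasure F]
    (hsupp : ∀ᵐ x ∂F, x ∈ K)
    (δ η : ℝ) (hδ : 0 < δ) (hη0 : 0 < η) (hη1 : η < 1)
    (hprob : F.prod F {p | ‖p.1 - p.2‖ < δ} ≤ ENNReal.ofReal η) :
    ∃ X : Finset (EuclideanSpace ℝ (Fin n)), ↑X ⊆ K ∧
      η ^ (-(1 : ℝ) / 2) ≤ (X.card : ℝ) ∧
      ∀ x ∈ X, ∀ y ∈ X, x ≠ y → δ ≤ ‖x - y‖ := by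
  set q := ⌈η ^ (-(1 : ℝ) / 2)⌉₊
  have hq : q.choose 2 * F.prod F {p | dist p.1 p.2 < δ} < 1 := by
    simp_rw [dist_eq_norm]
    calc q.choose 2 * F.prod F {p | ‖p.1 - p.2‖ < δ} ≤ q.choose 2 * ENNReal.ofReal η := by
          gcongr
      _ = ENNReal.ofReal (q.choose 2 * η) := by
          rw [ENNReal.ofReal_mul (by positivity), ENNReal.ofReal_natCast]
      _ < 1 := ENNReal.ofReal_lt_one.2 (choose_two_ceil_rpow_neg_half_mul_lt_one hη0 hη1)
  obtain ⟨X, hXK, hcard, hsep⟩ :=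
    exists_finset_card_eq_dist_le_of_choose_two_mul_lt_one F hsupp hδ q hq
  refine ⟨X, hXK, hcard ▸ Nat.le_ceil _, fun x hx y hy hxy ↦ ?_⟩
  simpa [dist_eq_norm] using hsep x hx y hy hxy
end

section
/- Let d ≥ 64 be a perfect square, let Ω be the 2D horizontal-and-vertical finite differences operator on √d × √d images (with cyclic indexing), and let K₂ be the union of all 2-dimensional subspaces K_T = {x : Ω_{T^c} x = 0} over supports T with dim(K_T) = 2. Then the packing number of K₂ ∩ S^{d-1} at scale 1/2 satisfies P(K₂ ∩ S^{d-1}, 1/2) ≥ exp(d/64). -/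
open MeasureTheory ProbabilityTheory Metric Set
open scoped ENNReal NNReal

/-- One row of the cyclic 2D finite differences operator. -/
noncomputable def omegaDiff {n : ℕ} [NeZero n] (t : (Fin n × Fin n) ⊕ (Fin n × Fin n))
    (x : EuclideanSpace ℝ (Fin n × Fin n)) : ℝ :=
  match t with
  | .inl (i, j) => x (i, j) - x (i, j + 1)
  | .inr (i, j) => x (i, j) - x (i + 1, j)

/-- The subspace of signals orthogonal to rows outside T. -/
noncomputable def KT {n : ℕ} [NeZero n] (T : Set ((Fin n × Fin n) ⊕ (Fin n × Fin n))) :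
    Submodule ℝ (EuclideanSpace ℝ (Fin n × Fin n)) where
  carrier := {x | ∀ t, t ∉ T → omegaDiff t x = 0}
  add_mem' := by
    intro a b ha hb t ht
    have h1 := ha t ht; have h2 := hb t ht
    rcases t with ⟨i, j⟩ | ⟨i, j⟩ <;>
      simp only [omegaDiff, PiLp.add_apply] at h1 h2 ⊢ <;> linarith
  zero_mem' := by
    intro t ht
    rcases t with ⟨i, j⟩ | ⟨i, j⟩ <;> simp [omegaDiff]
  smul_mem' := by
    intro c a ha t ht
    have h1 := ha t ht
    rcases t with ⟨i, j⟩ | ⟨i, j⟩ <;>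
      simp only [omegaDiff, PiLp.smul_apply, smul_eq_mul] at h1 ⊢ <;> linear_combination c * h1

/-- The union of the 2-dimensional subspaces `K_T` for the 2D finite differences operator. -/
noncomputable def Ktwo (n : ℕ) [NeZero n] : Set (EuclideanSpace ℝ (Fin n × Fin n)) :=
  ⋃ T ∈ {T : Set ((Fin n × Fin n) ⊕ (Fin n × Fin n)) | Module.finrank ℝ (KT T) = 2},
    (KT T : Set (EuclideanSpace ℝ (Fin n × Fin n)))

/-!
An image taking one value on a set `S` of pixels and another on its complement lies in the
subspace `K_T`, `T` the edges cut by `S`; when `S` and its complement are both connected in the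
torus grid, `K_T` is exactly two-dimensional. Normalised, the images of a family of sets of a
common size `s` are points of `K₂ ∩ S^{d-1}` at mutual distance `√(|S ∆ S'| / s)`.

For `n ≤ 19` the single pixels `(i, j)` with `i, j ≥ 1` already give `(n - 1)² ≥ exp (n² / 64)`
points. For larger `n` we use combs: the column `0` and the teeth, the rows `4r`, lie in `S`, and
each bit `(r, t)` of a set `B` adds the two pixels `(4r + 1, t + 1)`, `(4r + 2, t + 1)` below
tooth `r`; the complement stays connected through the last column and the rows `4r + 3`. Since
`|S_B ∆ S_B'| = 2 |B ∆ B'|`, a code of `N ≈ n² / 4` bits, constant weight `N / 2` and minimum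
distance `⌈s / 8⌉` yields a `1/2`-packing, and the greedy (Gilbert–Varshamov) bound provides
`C(N, N / 2) / ∑_{j < ⌈s / 8⌉} C(N, j) ≥ exp (n² / 64)` codewords. This last inequality is
evaluated for `n < 95` and follows from `∑_{j < r} C(N, j) 3^(N + 1 - r) ≤ 4^N` and
`2^N ≤ (N + 1) C(N, N / 2)` beyond.
-/

open Finset Module
open scoped symmDiff

namespace Finset

variable {α : Type*} [DecidableEq α]

theorem exists_subset_pairwise_not_rel_card_le_mul (r : α → α → Prop) [DecidableRel r]
    (hrefl : ∀ a, r a a) (hsymm : ∀ a b, r a b → r b a) (V : ℕ) (A : Finset α)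
    (hdeg : ∀ a ∈ A, #(A.filter (r a)) ≤ V) :
    ∃ C ⊆ A, (∀ a ∈ C, ∀ b ∈ C, a ≠ b → ¬ r a b) ∧ #A ≤ #C * V := by
  induction A using Finset.strongInduction with
  | _ A ih =>
    obtain rfl | ⟨a, ha⟩ := A.eq_empty_or_nonempty
    · exact ⟨∅, by simp⟩
    set A' := A.filter (¬ r a ·)
    have hA'A : A' ⊆ A := filter_subset _ _
    have haA' : a ∉ A' := fun h => (mem_filter.1 h).2 (hrefl a)
    obtain ⟨C, hCA', hC, hcard⟩ := ih A' (ssubset_of_subset_of_ne hA'A fun h => haA' (h ▸ ha))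
      fun b hb => (card_le_card (filter_subset_filter _ hA'A)).trans (hdeg b (hA'A hb))
    have hfar : ∀ b ∈ C, ¬ r a b := fun b hb => (mem_filter.1 (hCA' hb)).2
    refine ⟨insert a C, insert_subset ha (hCA'.trans hA'A), ?_, ?_⟩
    · simp only [mem_insert]
      rintro b (rfl | hb) c (rfl | hc) hbc
      · exact absurd rfl hbc
      · exact hfar c hc
      · exact fun h => hfar b hb (hsymm _ _ h)
      · exact hC b hb c hc hbc
    · have := hdeg a ha
      have := card_filter_add_card_filter_not (s := A) (r a)
      rw [card_insert_of_notMem fun h => haA' (hCA' h)]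
      linarith

theorem card_filter_card_symmDiff_lt_le {U s : Finset α} (hs : s ⊆ U) (r : ℕ) :
    #(U.powerset.filter fun t => #(s ∆ t) < r) ≤ ∑ j ∈ range r, (#U).choose j := by
  calc #(U.powerset.filter fun t => #(s ∆ t) < r)
      ≤ #((range r).biUnion fun j => U.powersetCard j) := by
        refine card_le_card_of_injOn (s ∆ ·) (fun t ht => ?_) (symmDiff_right_injective s).injOn
        rw [mem_coe, mem_filter, mem_powerset] at ht
        simp only [coe_biUnion, coe_range, Set.mem_iUnion, Set.mem_Iio, mem_coe, mem_powersetCard]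
        exact ⟨_, ht.2, symmDiff_subset_union.trans (union_subset hs ht.1), rfl⟩
    _ ≤ ∑ j ∈ range r, (#U).choose j := by
        refine card_biUnion_le.trans (sum_le_sum fun j _ => ?_)
        rw [card_powersetCard]

theorem exists_packing_powersetCard (U : Finset α) (w : ℕ) {r : ℕ} (hr : 0 < r) :
    ∃ C ⊆ U.powersetCard w, (∀ s ∈ C, ∀ t ∈ C, s ≠ t → r ≤ #(s ∆ t)) ∧
      (#U).choose w ≤ #C * ∑ j ∈ range r, (#U).choose j := by
  have hdeg : ∀ s ∈ U.powersetCard w,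
      #((U.powersetCard w).filter fun t => #(s ∆ t) < r) ≤ ∑ j ∈ range r, (#U).choose j := by
    refine fun s hs => (card_le_card fun t ht => ?_).trans
      (card_filter_card_symmDiff_lt_le (mem_powersetCard.1 hs).1 r)
    simp only [mem_filter, mem_powersetCard, mem_powerset] at ht ⊢
    exact ⟨ht.1.1, ht.2⟩
  obtain ⟨C, hCsub, hC, hcard⟩ := exists_subset_pairwise_not_rel_card_le_mul
    (fun s t => #(s ∆ t) < r) (by simpa using hr) (fun s t h => symmDiff_comm s t ▸ h) _ _ hdeg
  exact ⟨C, hCsub, fun s hs t ht hst => not_lt.1 (hC s hs t ht hst),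
    card_powersetCard w U ▸ hcard⟩

end Finset

namespace Nat

theorem sum_range_choose_mul_pow_le (N : ℕ) {r b : ℕ} (hr : r ≤ N + 1) (hb : 1 ≤ b) :
    (∑ j ∈ range r, N.choose j) * b ^ (N + 1 - r) ≤ (b + 1) ^ N := by
  calc (∑ j ∈ range r, N.choose j) * b ^ (N + 1 - r)
      ≤ ∑ j ∈ range (N + 1), N.choose j * b ^ (N - j) := by
        rw [sum_mul]
        refine (sum_le_sum fun j hj => ?_).trans
          (sum_le_sum_of_subset (range_subset_range.2 hr))
        rw [Finset.mem_range] at hj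
        exact Nat.mul_le_mul_left _ (Nat.pow_le_pow_right hb (by omega))
    _ = (b + 1) ^ N := by
        rw [show b + 1 = 1 + b from add_comm b 1, add_pow]
        exact sum_congr rfl fun j _ => by simp [mul_comm]

theorem two_pow_le_succ_mul_choose_half (N : ℕ) : 2 ^ N ≤ (N + 1) * N.choose (N / 2) := by
  calc 2 ^ N = ∑ j ∈ range (N + 1), N.choose j := (sum_range_choose N).symm
    _ ≤ ∑ _j ∈ range (N + 1), N.choose (N / 2) := sum_le_sum fun j _ => choose_le_middle j N
    _ = (N + 1) * N.choose (N / 2) := by simp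

theorem sq_le_two_pow {n : ℕ} (hn : 4 ≤ n) : n ^ 2 ≤ 2 ^ n := by
  induction n, hn using Nat.le_induction with
  | base => norm_num
  | succ n hn ih =>
    calc (n + 1) ^ 2 ≤ 2 * n ^ 2 := by nlinarith
      _ ≤ 2 ^ (n + 1) := by rw [pow_succ 2 n]; omega

theorem two_pow_le_three_pow {a b : ℕ} (h : 12 * a ≤ 19 * b) : 2 ^ a ≤ 3 ^ b := by
  refine (Nat.pow_le_pow_iff_left (by norm_num : 19 ≠ 0)).1 ?_
  calc (2 ^ a) ^ 19 = (2 ^ 19) ^ a := by rw [← pow_mul, ← pow_mul, mul_comm]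
    _ ≤ (3 ^ 12) ^ a := Nat.pow_le_pow_left (by norm_num) a
    _ = 3 ^ (12 * a) := by rw [← pow_mul]
    _ ≤ 3 ^ (19 * b) := Nat.pow_le_pow_right (by norm_num) h
    _ = (3 ^ b) ^ 19 := by rw [← pow_mul, mul_comm]

end Nat

section IndicatorVec

variable {ι : Type*} [Fintype ι] [DecidableEq ι]

def indicatorVec (S : Finset ι) : EuclideanSpace ℝ ι :=
  WithLp.toLp 2 fun p => if p ∈ S then 1 else 0

omit [Fintype ι] in
lemma indicatorVec_apply (S : Finset ι) (p : ι) : indicatorVec S p = if p ∈ S then 1 else 0 :=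
  rfl

lemma norm_indicatorVec_sub (S T : Finset ι) :
    ‖indicatorVec S - indicatorVec T‖ = √(#(S ∆ T) : ℝ) := by
  rw [EuclideanSpace.norm_eq]
  congr 1
  calc ∑ p, ‖(indicatorVec S - indicatorVec T) p‖ ^ 2
      = ∑ p, if p ∈ S ∆ T then (1 : ℝ) else 0 := by
        refine sum_congr rfl fun p _ => ?_
        by_cases hS : p ∈ S <;> by_cases hT : p ∈ T <;>
          simp [indicatorVec_apply, Finset.mem_symmDiff, hS, hT]
    _ = #(S ∆ T) := by simp

lemma norm_indicatorVec (S : Finset ι) : ‖indicatorVec S‖ = √(#S : ℝ) := by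
  have h := norm_indicatorVec_sub S ∅
  rwa [show indicatorVec (∅ : Finset ι) = 0 by ext; simp [indicatorVec_apply], sub_zero,
    ← Finset.bot_eq_empty, symmDiff_bot] at h

end IndicatorVec

section Grid

open Fin.NatCast

variable {n : ℕ} [NeZero n]

def edgeSrc : (Fin n × Fin n) ⊕ (Fin n × Fin n) → Fin n × Fin n
  | .inl p => p
  | .inr p => p

def edgeTgt : (Fin n × Fin n) ⊕ (Fin n × Fin n) → Fin n × Fin n
  | .inl (i, j) => (i, j + 1)
  | .inr (i, j) => (i + 1, j)

lemma omegaDiff_eq (t : (Fin n × Fin n) ⊕ (Fin n × Fin n))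
    (x : EuclideanSpace ℝ (Fin n × Fin n)) :
    omegaDiff t x = x (edgeSrc t) - x (edgeTgt t) := by
  rcases t with ⟨i, j⟩ | ⟨i, j⟩ <;> rfl

def cutEdges (S : Finset (Fin n × Fin n)) : Set ((Fin n × Fin n) ⊕ (Fin n × Fin n)) :=
  {t | ¬(edgeSrc t ∈ S ↔ edgeTgt t ∈ S)}

variable {S : Finset (Fin n × Fin n)} {y : EuclideanSpace ℝ (Fin n × Fin n)}

lemma mem_KT_cutEdges_iff :
    y ∈ KT (cutEdges S) ↔
      ∀ t, (edgeSrc t ∈ S ↔ edgeTgt t ∈ S) → y (edgeSrc t) = y (edgeTgt t) := by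
  refine forall_congr' fun t => ?_
  rw [omegaDiff_eq, sub_eq_zero]
  exact imp_congr_left not_not

lemma indicatorVec_mem_KT_cutEdges (S : Finset (Fin n × Fin n)) :
    indicatorVec S ∈ KT (cutEdges S) :=
  mem_KT_cutEdges_iff.2 fun _ h => by simp only [indicatorVec_apply, h]

lemma indicatorVec_compl_mem_KT_cutEdges (S : Finset (Fin n × Fin n)) :
    indicatorVec Sᶜ ∈ KT (cutEdges S) :=
  mem_KT_cutEdges_iff.2 fun _ h => by
    rw [indicatorVec_apply, indicatorVec_apply]
    exact if_congr (by simp only [Finset.mem_compl, h]) rfl rfl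

-- For nonempty `S` and `Sᶜ`, this says that both are connected in the torus grid graph.
def SidesConnected (S : Finset (Fin n × Fin n)) : Prop :=
  ∀ y ∈ KT (cutEdges S), ∃ a c : ℝ, ∀ p, y p = if p ∈ S then a else c

lemma finrank_KT_cutEdges (hS : S.Nonempty) (hSc : Sᶜ.Nonempty) (hconn : SidesConnected S) :
    finrank ℝ (KT (cutEdges S)) = 2 := by
  obtain ⟨p, hp⟩ := hS
  obtain ⟨q, hq⟩ := hSc
  have hq' : q ∉ S := mem_compl.1 hq
  have hspan :
      KT (cutEdges S) = Submodule.span ℝ (Set.range ![indicatorVec S, indicatorVec Sᶜ]) := by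
    refine le_antisymm (fun y hy => ?_) (Submodule.span_le.2 ?_)
    · obtain ⟨a, c, hy⟩ := hconn y hy
      refine (Submodule.mem_span_range_iff_exists_fun ℝ).2 ⟨![a, c], ?_⟩
      ext r
      by_cases hr : r ∈ S <;> simp [Fin.sum_univ_two, indicatorVec_apply, hr, hy r]
    · rintro _ ⟨i, rfl⟩
      fin_cases i
      exacts [indicatorVec_mem_KT_cutEdges S, indicatorVec_compl_mem_KT_cutEdges S]
  have hind : LinearIndependent ℝ ![indicatorVec S, indicatorVec Sᶜ] := by
    refine LinearIndependent.pair_iff.2 fun a c h => ⟨?_, ?_⟩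
    · simpa [indicatorVec_apply, hp] using congrArg (· p) h
    · simpa [indicatorVec_apply, hq'] using congrArg (· q) h
  rw [hspan, finrank_span_eq_card hind, Fintype.card_fin]

lemma smul_indicatorVec_mem_Ktwo (hS : S.Nonempty) (hSc : Sᶜ.Nonempty)
    (hconn : SidesConnected S) (c : ℝ) : c • indicatorVec S ∈ Ktwo n :=
  Set.mem_iUnion₂.2 ⟨cutEdges S, finrank_KT_cutEdges hS hSc hconn,
    Submodule.smul_mem _ c (indicatorVec_mem_KT_cutEdges S)⟩

lemma apply_eq_of_chain (hy : y ∈ KT (cutEdges S)) (f : ℕ → Fin n × Fin n)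
    (hf : ∀ k, ∃ t, edgeSrc t = f k ∧ edgeTgt t = f (k + 1)) :
    ∀ L, (∀ k ≤ L, (f k ∈ S ↔ f 0 ∈ S)) → y (f 0) = y (f L)
  | 0, _ => rfl
  | L + 1, hside => by
    obtain ⟨t, hsrc, htgt⟩ := hf L
    rw [apply_eq_of_chain hy f hf L fun k hk => hside k (by omega), ← hsrc, ← htgt]
    refine mem_KT_cutEdges_iff.1 hy t ?_
    rw [hsrc, htgt, hside L (by omega), hside (L + 1) le_rfl]

-- Coordinates are read modulo `n`, so `cell i (j + 1)` is always the right neighbour of `cell i j`.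
def cell (i j : ℕ) : Fin n × Fin n := (i, j)

def gridSet (T : Finset (ℕ × ℕ)) : Finset (Fin n × Fin n) :=
  univ.filter fun p => ((p.1 : ℕ), (p.2 : ℕ)) ∈ T

lemma cell_mem_gridSet {T : Finset (ℕ × ℕ)} {i j : ℕ} (hi : i < n) (hj : j < n) :
    (cell i j : Fin n × Fin n) ∈ gridSet T ↔ (i, j) ∈ T := by
  simp [gridSet, cell, Nat.mod_eq_of_lt hi, Nat.mod_eq_of_lt hj]

omit [NeZero n] in
lemma gridSet_symmDiff (T T' : Finset (ℕ × ℕ)) :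
    (gridSet (T ∆ T') : Finset (Fin n × Fin n)) = gridSet T ∆ gridSet T' := by
  ext p
  simp [gridSet, Finset.mem_symmDiff]

omit [NeZero n] in
lemma card_gridSet {T : Finset (ℕ × ℕ)} (hT : T ⊆ range n ×ˢ range n) :
    #(gridSet T : Finset (Fin n × Fin n)) = #T := by
  refine card_bij (fun p _ => ((p.1 : ℕ), (p.2 : ℕ))) (fun p hp => (mem_filter.1 hp).2)
    (fun p _ q _ h => ?_) fun x hx => ?_
  · simp only [Prod.mk.injEq] at h
    exact Prod.ext (Fin.ext h.1) (Fin.ext h.2)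
  · have := hT hx
    simp only [mem_product, Finset.mem_range] at this
    exact ⟨(⟨x.1, this.1⟩, ⟨x.2, this.2⟩), by simpa [gridSet] using hx, rfl⟩

variable {T : Finset (ℕ × ℕ)}

lemma apply_cell_eq_of_row (hy : y ∈ KT (cutEdges (gridSet T))) {i a b : ℕ} (hi : i < n)
    (hab : a ≤ b) (hb : b < n)
    (hT : (∀ k, a ≤ k → k ≤ b → (i, k) ∈ T) ∨ (∀ k, a ≤ k → k ≤ b → (i, k) ∉ T)) :
    y (cell i a) = y (cell i b) := by
  obtain ⟨L, rfl⟩ := Nat.exists_eq_add_of_le hab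
  refine apply_eq_of_chain hy (fun k => cell i (a + k))
    (fun k => ⟨.inl (cell i (a + k)), rfl, ?_⟩) L fun k hk => ?_
  · simp [cell, edgeTgt, add_assoc]
  · simp only [add_zero]
    rw [cell_mem_gridSet hi (by omega), cell_mem_gridSet hi (by omega)]
    rcases hT with hT | hT
    · exact iff_of_true (hT _ (by omega) (by omega)) (hT _ le_rfl (by omega))
    · exact iff_of_false (hT _ (by omega) (by omega)) (hT _ le_rfl (by omega))

lemma apply_cell_eq_of_col (hy : y ∈ KT (cutEdges (gridSet T))) {a b j : ℕ} (hj : j < n)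
    (hab : a ≤ b) (hb : b < n)
    (hT : (∀ k, a ≤ k → k ≤ b → (k, j) ∈ T) ∨ (∀ k, a ≤ k → k ≤ b → (k, j) ∉ T)) :
    y (cell a j) = y (cell b j) := by
  obtain ⟨L, rfl⟩ := Nat.exists_eq_add_of_le hab
  refine apply_eq_of_chain hy (fun k => cell (a + k) j)
    (fun k => ⟨.inr (cell (a + k) j), rfl, ?_⟩) L fun k hk => ?_
  · simp [cell, edgeTgt, add_assoc]
  · simp only [add_zero]
    rw [cell_mem_gridSet (by omega) hj, cell_mem_gridSet (by omega) hj]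
    rcases hT with hT | hT
    · exact iff_of_true (hT _ (by omega) (by omega)) (hT _ le_rfl (by omega))
    · exact iff_of_false (hT _ (by omega) (by omega)) (hT _ le_rfl (by omega))

lemma sidesConnected_gridSet (p₀ q₀ : Fin n × Fin n)
    (h : ∀ y ∈ KT (cutEdges (gridSet T)), ∀ i < n, ∀ j < n,
      ((i, j) ∈ T → y (cell i j) = y p₀) ∧ ((i, j) ∉ T → y (cell i j) = y q₀)) :
    SidesConnected (gridSet T : Finset (Fin n × Fin n)) := by
  intro y hy
  refine ⟨y p₀, y q₀, fun p => ?_⟩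
  obtain ⟨hin, hout⟩ := h y hy p.1 p.1.isLt p.2 p.2.isLt
  have hp : (cell p.1 p.2 : Fin n × Fin n) = p := by simp [cell]
  have hmem : p ∈ gridSet T ↔ ((p.1 : ℕ), (p.2 : ℕ)) ∈ T := by simp [gridSet]
  rw [hp] at hin hout
  split_ifs with hpS
  · exact hin (hmem.1 hpS)
  · exact hout (mt hmem.2 hpS)

end Grid

section Packing

variable {n : ℕ} [NeZero n]

lemma one_half_le_inv_sqrt_mul_sqrt {s d : ℕ} (hs : 0 < s) (h : s ≤ 4 * d) :
    (1 / 2 : ℝ) ≤ (√(s : ℝ))⁻¹ * √(d : ℝ) := by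
  have h4 : √((4 : ℝ) * d) = 2 * √(d : ℝ) := by
    rw [Real.sqrt_mul (by norm_num), show (4 : ℝ) = 2 ^ 2 by norm_num, Real.sqrt_sq (by norm_num)]
  have hsd : √(s : ℝ) ≤ 2 * √(d : ℝ) := h4 ▸ Real.sqrt_le_sqrt (by exact_mod_cast h)
  rw [inv_mul_eq_div, le_div_iff₀ (Real.sqrt_pos.2 (Nat.cast_pos.2 hs))]
  linarith

def IsKtwoPacking (n : ℕ) [NeZero n] (X : Finset (EuclideanSpace ℝ (Fin n × Fin n))) : Prop :=
  ↑X ⊆ Ktwo n ∩ sphere 0 1 ∧ ∀ x ∈ X, ∀ y ∈ X, x ≠ y → (1 / 2 : ℝ) ≤ ‖x - y‖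

theorem exists_packing_of_gridSets {κ : Type*} (C : Finset κ) (T : κ → Finset (ℕ × ℕ)) {s : ℕ}
    (hs : 0 < s) (hsn : s < n ^ 2) (hbox : ∀ k ∈ C, T k ⊆ range n ×ˢ range n)
    (hcard : ∀ k ∈ C, #(T k) = s)
    (hsep : ∀ k ∈ C, ∀ k' ∈ C, k ≠ k' → s ≤ 4 * #(T k ∆ T k'))
    (hconn : ∀ k ∈ C, SidesConnected (gridSet (T k) : Finset (Fin n × Fin n))) :
    ∃ X, IsKtwoPacking n X ∧ #X = #C := by
  set f : κ → EuclideanSpace ℝ (Fin n × Fin n) :=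
    fun k => (√(s : ℝ))⁻¹ • indicatorVec (gridSet (T k))
  have hs' : (0 : ℝ) < √(s : ℝ) := Real.sqrt_pos.2 (Nat.cast_pos.2 hs)
  have hcard' : ∀ k ∈ C, #(gridSet (T k) : Finset (Fin n × Fin n)) = s := fun k hk =>
    (card_gridSet (hbox k hk)).trans (hcard k hk)
  have hnorm : ∀ k ∈ C, ‖f k‖ = 1 := fun k hk => by
    rw [norm_smul, norm_indicatorVec, hcard' k hk, norm_inv, Real.norm_of_nonneg hs'.le,
      inv_mul_cancel₀ hs'.ne']
  have hdist : ∀ k ∈ C, ∀ k' ∈ C, k ≠ k' → (1 / 2 : ℝ) ≤ ‖f k - f k'‖ := by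
    intro k hk k' hk' hne
    have hbox' := Finset.symmDiff_subset_union.trans (Finset.union_subset (hbox k hk) (hbox k' hk'))
    rw [← smul_sub, norm_smul, norm_indicatorVec_sub, ← gridSet_symmDiff, card_gridSet hbox',
      norm_inv, Real.norm_of_nonneg hs'.le]
    exact one_half_le_inv_sqrt_mul_sqrt hs (hsep k hk k' hk' hne)
  have hKtwo : ∀ k ∈ C, f k ∈ Ktwo n := fun k hk => by
    refine smul_indicatorVec_mem_Ktwo (card_pos.1 (hcard' k hk ▸ hs)) (card_pos.1 ?_)
      (hconn k hk) _
    rw [card_compl, hcard' k hk, Fintype.card_prod, Fintype.card_fin, ← sq]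
    omega
  have hinj : Set.InjOn f C := fun k hk k' hk' h => by
    by_contra hne
    have := hdist k hk k' hk' hne
    rw [h, sub_self, norm_zero] at this
    norm_num at this
  refine ⟨C.image f, ⟨?_, ?_⟩, card_image_of_injOn hinj⟩
  · rw [coe_image]
    rintro _ ⟨k, hk, rfl⟩
    exact ⟨hKtwo k hk, mem_sphere_zero_iff_norm.2 (hnorm k hk)⟩
  · simp only [Finset.mem_image]
    rintro _ ⟨k, hk, rfl⟩ _ ⟨k', hk', rfl⟩ hne
    exact hdist k hk k' hk' fun h => hne (h ▸ rfl)

end Packing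

section Singleton

variable {n : ℕ} [NeZero n]

lemma sidesConnected_singleton {a b : ℕ} (ha : 1 ≤ a) (hb : 1 ≤ b) :
    SidesConnected (gridSet {(a, b)} : Finset (Fin n × Fin n)) := by
  refine sidesConnected_gridSet (cell a b) (cell 0 0) fun y hy i hi j hj =>
    ⟨fun h => ?_, fun h => ?_⟩
  · obtain ⟨rfl, rfl⟩ := Prod.mk.inj (Finset.mem_singleton.1 h)
    rfl
  simp only [Finset.mem_singleton, Prod.mk.injEq, not_and_or] at h
  have hout : ∀ {k l : ℕ}, k ≠ a ∨ l ≠ b → (k, l) ∉ ({(a, b)} : Finset (ℕ × ℕ)) := by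
    simp only [Finset.mem_singleton, Prod.mk.injEq, not_and_or, imp_self, implies_true]
  rcases h with hia | hjb
  · calc y (cell i j) = y (cell i 0) :=
          (apply_cell_eq_of_row hy hi (Nat.zero_le j) hj (.inr fun _ _ _ => hout (.inl hia))).symm
      _ = y (cell 0 0) := (apply_cell_eq_of_col hy (by omega) (Nat.zero_le i) hi
          (.inr fun _ _ _ => hout (.inr (by omega)))).symm
  · calc y (cell i j) = y (cell 0 j) :=
          (apply_cell_eq_of_col hy hj (Nat.zero_le i) hi (.inr fun _ _ _ => hout (.inr hjb))).symm
      _ = y (cell 0 0) := (apply_cell_eq_of_row hy (by omega) (Nat.zero_le j) hj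
          (.inr fun _ _ _ => hout (.inl (by omega)))).symm

end Singleton

section Comb

variable (n : ℕ)

def combBits : Finset (ℕ × ℕ) := range (n / 4) ×ˢ range (n - 2)

def combBase : Finset (ℕ × ℕ) :=
  range n ×ˢ {0} ∪ (range (n / 4)).image (4 * ·) ×ˢ Finset.Icc 1 (n - 2)

def bitCells (B : Finset (ℕ × ℕ)) : Finset (ℕ × ℕ) :=
  (B ×ˢ (univ : Finset (Fin 2))).image fun x => (4 * x.1.1 + 1 + x.2, x.1.2 + 1)

def comb (B : Finset (ℕ × ℕ)) : Finset (ℕ × ℕ) := combBase n ∪ bitCells B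

variable {n}

lemma bitCell_injective :
    Function.Injective fun x : (ℕ × ℕ) × Fin 2 => (4 * x.1.1 + 1 + (x.2 : ℕ), x.1.2 + 1) := by
  rintro ⟨⟨r, t⟩, k⟩ ⟨⟨r', t'⟩, k'⟩ h
  simp only [Prod.mk.injEq] at h
  have := k.isLt
  have := k'.isLt
  have hr : r = r' := by omega
  have hk : k = k' := Fin.ext (by omega)
  have ht : t = t' := by omega
  subst hr hk ht
  rfl

lemma card_bitCells (B : Finset (ℕ × ℕ)) : #(bitCells B) = 2 * #B := by
  rw [bitCells, card_image_of_injective _ bitCell_injective, card_product, card_univ,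
    Fintype.card_fin, mul_comm]

lemma bitCells_symmDiff (B B' : Finset (ℕ × ℕ)) :
    bitCells (B ∆ B') = bitCells B ∆ bitCells B' := by
  rw [bitCells, bitCells, bitCells, ← image_symmDiff _ _ bitCell_injective]
  congr 1
  ext
  simp [Finset.mem_symmDiff]

lemma mem_bitCells {B : Finset (ℕ × ℕ)} {i j : ℕ} :
    (i, j) ∈ bitCells B ↔ (i % 4 = 1 ∨ i % 4 = 2) ∧ 1 ≤ j ∧ (i / 4, j - 1) ∈ B := by
  simp only [bitCells, Finset.mem_image, mem_product, Finset.mem_univ, and_true, Prod.mk.injEq,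
    Prod.exists]
  constructor
  · rintro ⟨r, t, k, hB, rfl, rfl⟩
    have := k.isLt
    refine ⟨by omega, by omega, ?_⟩
    rwa [show (4 * r + 1 + k) / 4 = r by omega, Nat.add_sub_cancel]
  · rintro ⟨hi, hj, hB⟩
    exact ⟨i / 4, j - 1, ⟨i % 4 - 1, by omega⟩, hB, by simp; omega, by omega⟩

lemma mem_combBase {i j : ℕ} :
    (i, j) ∈ combBase n ↔ i < n ∧ j = 0 ∨ i < 4 * (n / 4) ∧ i % 4 = 0 ∧ 1 ≤ j ∧ j ≤ n - 2 := by
  simp only [combBase, Finset.mem_union, mem_product, Finset.mem_range, Finset.mem_singleton,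
    Finset.mem_image, Finset.mem_Icc]
  constructor
  · rintro (h | ⟨⟨r, hr, rfl⟩, hj⟩)
    · exact .inl h
    · exact .inr ⟨by omega, by omega, hj⟩
  · rintro (h | ⟨hi, hi4, hj⟩)
    · exact .inl h
    · exact .inr ⟨⟨i / 4, by omega, by omega⟩, hj⟩

lemma disjoint_combBase_bitCells (B : Finset (ℕ × ℕ)) : Disjoint (combBase n) (bitCells B) := by
  rw [Finset.disjoint_left]
  rintro ⟨i, j⟩ h h'
  rw [mem_combBase] at h
  rw [mem_bitCells] at h'
  omega

lemma card_combBase : #(combBase n) = n + n / 4 * (n - 2) := by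
  rw [combBase, card_union_of_disjoint, card_product, card_product, card_range,
    Finset.card_singleton,
    Finset.card_image_of_injective _ (mul_right_injective₀ (by norm_num : (4 : ℕ) ≠ 0)),
    card_range, Nat.card_Icc, Nat.add_sub_cancel, mul_one]
  rw [Finset.disjoint_left]
  rintro ⟨i, j⟩ h h'
  simp only [mem_product, Finset.mem_singleton, Finset.mem_Icc] at h h'
  omega

lemma card_comb (B : Finset (ℕ × ℕ)) : #(comb n B) = n + n / 4 * (n - 2) + 2 * #B := by
  rw [comb, card_union_of_disjoint (disjoint_combBase_bitCells B), card_combBase, card_bitCells]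

lemma card_comb_symmDiff (B B' : Finset (ℕ × ℕ)) :
    #(comb n B ∆ comb n B') = 2 * #(B ∆ B') := by
  have h : comb n B ∆ comb n B' = bitCells (B ∆ B') := by
    rw [bitCells_symmDiff, comb, comb]
    ext x
    have h : x ∈ combBase n → x ∉ bitCells B :=
      fun hx => Finset.disjoint_left.1 (disjoint_combBase_bitCells B) hx
    have h' : x ∈ combBase n → x ∉ bitCells B' :=
      fun hx => Finset.disjoint_left.1 (disjoint_combBase_bitCells B') hx
    simp only [Finset.mem_symmDiff, Finset.mem_union]
    tauto
  rw [h, card_bitCells]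

lemma comb_subset (B : Finset (ℕ × ℕ)) (hB : B ⊆ combBits n) (hn : 0 < n) :
    comb n B ⊆ range n ×ˢ range n := by
  rintro ⟨i, j⟩ h
  simp only [mem_product, Finset.mem_range]
  rcases Finset.mem_union.1 h with h | h
  · rw [mem_combBase] at h
    omega
  · rw [mem_bitCells] at h
    have := hB h.2.2
    simp only [combBits, mem_product, Finset.mem_range] at this
    omega

lemma mem_comb {B : Finset (ℕ × ℕ)} (hB : B ⊆ combBits n) {i j : ℕ} (hi : i < n) :
    (i, j) ∈ comb n B ↔ j = 0 ∨ 1 ≤ j ∧ j ≤ n - 2 ∧ i < 4 * (n / 4) ∧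
      (i % 4 = 0 ∨ (i % 4 = 1 ∨ i % 4 = 2) ∧ (i / 4, j - 1) ∈ B) := by
  rw [comb, Finset.mem_union, mem_combBase, mem_bitCells]
  constructor
  · rintro ((⟨_, h⟩ | h) | ⟨h4, hj1, hB'⟩)
    · exact .inl h
    · omega
    · have := hB hB'
      simp only [combBits, mem_product, Finset.mem_range] at this
      exact .inr ⟨hj1, by omega, by omega, .inr ⟨h4, hB'⟩⟩
  · rintro (h | ⟨hj1, hj2, hi4, h | ⟨h4, hB'⟩⟩)
    · exact .inl (.inl ⟨hi, h⟩)
    · exact .inl (.inr ⟨hi4, h, hj1, hj2⟩)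
    · exact .inr ⟨h4, hj1, hB'⟩

end Comb

section CombConnected

variable {n : ℕ} [NeZero n] {B : Finset (ℕ × ℕ)} {y : EuclideanSpace ℝ (Fin n × Fin n)}

lemma apply_eq_of_mem_comb (hB : B ⊆ combBits n)
    (hy : y ∈ KT (cutEdges (gridSet (comb n B)))) {i j : ℕ} (hi : i < n) (hj : j < n)
    (h : (i, j) ∈ comb n B) : y (cell i j) = y (cell 0 0) := by
  have spine : ∀ i < n, y (cell i 0) = y (cell 0 0) := fun i hi =>
    (apply_cell_eq_of_col hy (NeZero.pos n) (Nat.zero_le i) hi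
      (.inl fun k _ hk => (mem_comb hB (by omega)).2 (.inl rfl))).symm
  have tooth : ∀ r < n / 4, ∀ j ≤ n - 2, y (cell (4 * r) j) = y (cell 0 0) := by
    refine fun r hr j hj => (apply_cell_eq_of_row hy (by omega) (Nat.zero_le j) (by omega)
      (.inl fun k _ hk => (mem_comb hB (by omega)).2 ?_)).symm.trans (spine _ (by omega))
    rcases k.eq_zero_or_pos with hk0 | hk0
    exacts [.inl hk0, .inr ⟨hk0, by omega, by omega, .inl (by omega)⟩]
  rw [mem_comb hB hi] at h
  rcases h with rfl | ⟨hj1, hj2, hi4, h0 | ⟨h12, hbit⟩⟩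
  · exact spine i hi
  · rw [show i = 4 * (i / 4) by omega]
    exact tooth _ (by omega) j hj2
  · rw [← tooth (i / 4) (by omega) j hj2]
    refine (apply_cell_eq_of_col hy hj (by omega : 4 * (i / 4) ≤ i) hi (.inl fun k hk hk' =>
      (mem_comb hB (by omega)).2 (.inr ⟨hj1, hj2, by omega, ?_⟩))).symm
    rcases (by omega : k % 4 = 0 ∨ k % 4 = 1 ∨ k % 4 = 2) with h0 | h12
    · exact .inl h0
    · exact .inr ⟨h12, by rwa [show k / 4 = i / 4 by omega]⟩

lemma apply_eq_of_notMem_comb (hn : 2 ≤ n) (hB : B ⊆ combBits n)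
    (hy : y ∈ KT (cutEdges (gridSet (comb n B)))) {i j : ℕ} (hi : i < n) (hj : j < n)
    (h : (i, j) ∉ comb n B) : y (cell i j) = y (cell 0 (n - 1)) := by
  have lastCol : ∀ i < n, y (cell i (n - 1)) = y (cell 0 (n - 1)) := fun i hi =>
    (apply_cell_eq_of_col hy (by omega) (Nat.zero_le i) hi (.inr fun k _ hk => by
      rw [mem_comb hB (by omega)]
      rintro (h | ⟨_, h, _⟩) <;> omega)).symm
  have gapRow : ∀ i < n, (i % 4 = 3 ∨ 4 * (n / 4) ≤ i) → ∀ j, 1 ≤ j → j < n →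
      y (cell i j) = y (cell 0 (n - 1)) := fun i hi hgap j hj1 hj =>
    (apply_cell_eq_of_row hy hi (by omega : j ≤ n - 1) (by omega) (.inr fun k hk _ => by
      rw [mem_comb hB hi]
      rintro (h | ⟨_, _, h, h' | ⟨h', _⟩⟩) <;> omega)).trans (lastCol i hi)
  rw [mem_comb hB hi] at h
  simp only [not_or, not_and] at h
  obtain ⟨hj0, h⟩ := h
  by_cases hjn : j = n - 1
  · exact hjn ▸ lastCol i hi
  by_cases hgap : i % 4 = 3 ∨ 4 * (n / 4) ≤ i
  · exact gapRow i hi hgap j (by omega) hj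
  have hbit := (h (by omega) (by omega) (by omega)).2
  rw [← gapRow (4 * (i / 4) + 3) (by omega) (.inl (by omega)) j (by omega) hj]
  refine apply_cell_eq_of_col hy hj (by omega) (by omega) (.inr fun k hk hk' => ?_)
  rw [mem_comb hB (by omega)]
  rintro (h | ⟨_, _, _, h | ⟨h', hb⟩⟩)
  · omega
  · omega
  · exact hbit (by omega) (by rwa [show k / 4 = i / 4 by omega] at hb)

lemma sidesConnected_comb (hn : 2 ≤ n) (hB : B ⊆ combBits n) :
    SidesConnected (gridSet (comb n B) : Finset (Fin n × Fin n)) :=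
  sidesConnected_gridSet (cell 0 0) (cell 0 (n - 1)) fun _ hy _ hi _ hj =>
    ⟨apply_eq_of_mem_comb hB hy hi hj, apply_eq_of_notMem_comb hn hB hy hi hj⟩

end CombConnected

section Parameters

def codeLength (n : ℕ) : ℕ := n / 4 * (n - 2)

def combSize (n : ℕ) : ℕ := n + codeLength n + 2 * (codeLength n / 2)

def packingRadius (n : ℕ) : ℕ := (combSize n + 7) / 8

lemma card_combBits (n : ℕ) : #(combBits n) = codeLength n := by
  simp [combBits, codeLength]

lemma packingRadius_pos {n : ℕ} (hn : 0 < n) : 0 < packingRadius n := by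
  simp only [packingRadius, combSize]
  omega

lemma combSize_le_eight_mul_packingRadius (n : ℕ) : combSize n ≤ 8 * packingRadius n := by
  simp only [packingRadius]
  omega

lemma combSize_lt_sq {n : ℕ} (hn : 2 ≤ n) : combSize n < n ^ 2 := by
  have h2 : 2 * (codeLength n / 2) ≤ codeLength n := Nat.mul_div_le _ 2
  have hN : 4 * codeLength n ≤ n * (n - 2) := by
    rw [codeLength, ← mul_assoc]
    exact Nat.mul_le_mul_right _ (Nat.mul_div_le n 4)
  obtain ⟨m, rfl⟩ : ∃ m, n = m + 2 := ⟨n - 2, by omega⟩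
  rw [Nat.add_sub_cancel] at hN
  simp only [combSize]
  nlinarith

lemma power_criterion_of_large {n : ℕ} (hn : 95 ≤ n) :
    68 ^ (n ^ 2) * (codeLength n + 1) ^ 64 * 2 ^ (64 * codeLength n) ≤
      25 ^ (n ^ 2) * 3 ^ (64 * (codeLength n + 1 - packingRadius n)) := by
  set N := codeLength n
  set a := N + 1 - packingRadius n
  have hN : (n - 3) * (n - 2) ≤ 4 * N := by
    rw [show 4 * N = 4 * (n / 4) * (n - 2) by simp only [N, codeLength]; ring]
    exact Nat.mul_le_mul_right _ (by omega)
  have hNn : N + 1 ≤ n ^ 2 := by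
    have : N ≤ (n - 1) * n := Nat.mul_le_mul (by omega) (by omega)
    obtain ⟨m, rfl⟩ : ∃ m, n = m + 1 := ⟨n - 1, by omega⟩
    rw [Nat.add_sub_cancel] at this
    nlinarith
  have hr : 48 * N ≤ 64 * a + 8 * n := by
    have : 8 * packingRadius n ≤ n + 2 * N + 7 := by
      simp only [packingRadius, combSize]
      omega
    omega
  -- with `hr`, this is what `Nat.two_pow_le_three_pow` needs in the last step
  have hexp : 24 * n ^ 2 + 920 * n ≤ 144 * N := by
    obtain ⟨m, rfl⟩ : ∃ m, n = m + 3 := ⟨n - 3, by omega⟩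
    rw [Nat.add_sub_cancel, show m + 3 - 2 = m + 1 by omega] at hN
    nlinarith
  calc 68 ^ (n ^ 2) * (N + 1) ^ 64 * 2 ^ (64 * N)
      ≤ 25 ^ (n ^ 2) * 4 ^ (n ^ 2) * 2 ^ (64 * n) * 2 ^ (64 * N) := by
        refine Nat.mul_le_mul (Nat.mul_le_mul ?_ ?_) le_rfl
        · rw [← mul_pow]
          exact Nat.pow_le_pow_left (by norm_num) _
        · rw [pow_mul']
          exact Nat.pow_le_pow_left (hNn.trans (Nat.sq_le_two_pow (by omega))) _
    _ = 25 ^ (n ^ 2) * 2 ^ (2 * n ^ 2 + 64 * n + 64 * N) := by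
        rw [show (4 : ℕ) ^ (n ^ 2) = 2 ^ (2 * n ^ 2) by rw [pow_mul]; norm_num, pow_add, pow_add]
        ring
    _ ≤ 25 ^ (n ^ 2) * 3 ^ (64 * a) :=
        Nat.mul_le_mul_left _ (Nat.two_pow_le_three_pow (by omega))

lemma choose_criterion_of_large {n : ℕ} (hn : 95 ≤ n) :
    68 ^ (n ^ 2) * (∑ j ∈ range (packingRadius n), (codeLength n).choose j) ^ 64 ≤
      25 ^ (n ^ 2) * (codeLength n).choose (codeLength n / 2) ^ 64 := by
  set N := codeLength n
  set V := ∑ j ∈ range (packingRadius n), N.choose j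
  set a := N + 1 - packingRadius n
  have hrN : packingRadius n ≤ N + 1 := by
    have : 2 * (n - 2) ≤ N := Nat.mul_le_mul_right _ (by omega)
    simp only [packingRadius, combSize]
    omega
  have hV : V * 3 ^ a ≤ 4 ^ N := Nat.sum_range_choose_mul_pow_le N hrN (by norm_num)
  refine Nat.le_of_mul_le_mul_right (c := 3 ^ (64 * a)) ?_ (by positivity)
  calc 68 ^ (n ^ 2) * V ^ 64 * 3 ^ (64 * a) = 68 ^ (n ^ 2) * (V * 3 ^ a) ^ 64 := by ring
    _ ≤ 68 ^ (n ^ 2) * (4 ^ N) ^ 64 := Nat.mul_le_mul_left _ (Nat.pow_le_pow_left hV 64)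
    _ = 68 ^ (n ^ 2) * (2 ^ N) ^ 64 * 2 ^ (64 * N) := by
        rw [show (4 : ℕ) ^ N = 2 ^ N * 2 ^ N by rw [← mul_pow]; norm_num, mul_pow, pow_mul']
        ring
    _ ≤ 68 ^ (n ^ 2) * ((N + 1) * N.choose (N / 2)) ^ 64 * 2 ^ (64 * N) := by
        gcongr
        exact Nat.two_pow_le_succ_mul_choose_half N
    _ = 68 ^ (n ^ 2) * (N + 1) ^ 64 * 2 ^ (64 * N) * N.choose (N / 2) ^ 64 := by ring
    _ ≤ 25 ^ (n ^ 2) * 3 ^ (64 * a) * N.choose (N / 2) ^ 64 :=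
        Nat.mul_le_mul_right _ (power_criterion_of_large hn)
    _ = 25 ^ (n ^ 2) * N.choose (N / 2) ^ 64 * 3 ^ (64 * a) := by ring

lemma choose_criterion {n : ℕ} (hn : 20 ≤ n) :
    68 ^ (n ^ 2) * (∑ j ∈ range (packingRadius n), (codeLength n).choose j) ^ 64 ≤
      25 ^ (n ^ 2) * (codeLength n).choose (codeLength n / 2) ^ 64 := by
  rcases lt_or_ge n 95 with hsmall | hlarge
  · interval_cases n <;>
    · simp only [Nat.choose_eq_descFactorial_div_factorial]
      decide +kernel
  · exact choose_criterion_of_large hlarge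

end Parameters

section Assembly

lemma exp_div_le_of_pow_le {x k M : ℕ} (hk : k ≠ 0) (h : 68 ^ x ≤ 25 ^ x * M ^ k) :
    Real.exp (x / k) ≤ M := by
  have he : Real.exp 1 ≤ 68 / 25 := by
    have := Real.exp_one_lt_d9
    norm_num at this ⊢
    linarith
  refine le_of_pow_le_pow_left₀ hk (Nat.cast_nonneg M) ?_
  calc Real.exp (x / k) ^ k = Real.exp 1 ^ x := by
        rw [← Real.exp_nat_mul, ← Real.exp_nat_mul]
        congr 1
        field_simp
    _ ≤ (68 / 25) ^ x := pow_le_pow_left₀ (Real.exp_pos 1).le he x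
    _ ≤ M ^ k := by
        rw [div_pow, div_le_iff₀ (by positivity), mul_comm]
        exact_mod_cast h

lemma le_mul_pow_of_mul_pow_le {a b V A c k : ℕ} (hV : 0 < V) (h : a * V ^ k ≤ b * A ^ k)
    (hA : A ≤ c * V) : a ≤ b * c ^ k := by
  refine Nat.le_of_mul_le_mul_right (h.trans ?_) (pow_pos hV k)
  rw [mul_assoc, ← mul_pow]
  exact Nat.mul_le_mul_left _ (Nat.pow_le_pow_left hA k)

variable {n : ℕ} [NeZero n]

lemma exists_packing_singletons (h8 : 8 ≤ n) (h19 : n ≤ 19) :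
    ∃ X, IsKtwoPacking n X ∧ Real.exp ((n : ℝ) ^ 2 / 64) ≤ #X := by
  set C := Finset.Icc 1 (n - 1) ×ˢ Finset.Icc 1 (n - 1)
  have hC : ∀ p ∈ C, 1 ≤ p.1 ∧ p.1 < n ∧ 1 ≤ p.2 ∧ p.2 < n := fun p hp => by
    simp only [C, mem_product, Finset.mem_Icc] at hp
    omega
  obtain ⟨X, hX, hcard⟩ := exists_packing_of_gridSets C (fun p => {p}) one_pos (by nlinarith)
    (fun p hp => singleton_subset_iff.2 (by
      have := hC p hp
      simp only [mem_product, Finset.mem_range]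
      omega))
    (fun p _ => Finset.card_singleton p)
    (fun p _ q _ hpq => by
      have := card_pos.2 (symmDiff_nonempty.2 (singleton_inj.not.2 hpq))
      omega)
    (fun p hp => sidesConnected_singleton (hC p hp).1 (hC p hp).2.2.1)
  refine ⟨X, hX, ?_⟩
  rw [hcard, card_product, Nat.card_Icc, Nat.add_sub_cancel]
  have : 68 ^ (n ^ 2) ≤ 25 ^ (n ^ 2) * ((n - 1) * (n - 1)) ^ 64 := by
    interval_cases n <;> decide +kernel
  simpa using exp_div_le_of_pow_le (k := 64) (by norm_num) this

lemma exists_packing_combs (hn : 20 ≤ n) :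
    ∃ X, IsKtwoPacking n X ∧ Real.exp ((n : ℝ) ^ 2 / 64) ≤ #X := by
  have hr := packingRadius_pos (n := n) (by omega)
  obtain ⟨C, hCsub, hCsep, hCcard⟩ :=
    exists_packing_powersetCard (combBits n) (codeLength n / 2) hr
  have hB : ∀ B ∈ C, B ⊆ combBits n ∧ #B = codeLength n / 2 :=
    fun B hB => mem_powersetCard.1 (hCsub hB)
  obtain ⟨X, hX, hXcard⟩ := exists_packing_of_gridSets C (comb n)
    (by simp only [combSize]; omega) (combSize_lt_sq (by omega))
    (fun B hB' => comb_subset B (hB B hB').1 (by omega))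
    (fun B hB' => by rw [card_comb, (hB B hB').2]; rfl)
    (fun B hB' B' hB'' hne => by
      have := combSize_le_eight_mul_packingRadius n
      have := hCsep B hB' B' hB'' hne
      rw [card_comb_symmDiff]
      omega)
    (fun B hB' => sidesConnected_comb (by omega) (hB B hB').1)
  refine ⟨X, hX, ?_⟩
  have hV : 0 < ∑ j ∈ range (packingRadius n), (codeLength n).choose j :=
    sum_pos' (fun _ _ => Nat.zero_le _) ⟨0, Finset.mem_range.2 hr, by simp⟩
  rw [hXcard]
  simpa using exp_div_le_of_pow_le (x := n ^ 2) (k := 64) (by norm_num)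
    (le_mul_pow_of_mul_pow_le hV (choose_criterion hn) (card_combBits n ▸ hCcard))

end Assembly

/-- packing of `K₂ ∩ S^{d-1}` of cardinality at least `exp (d/64)` at
scale `1/2`, where `d = n²` and `Ω` is the cyclic 2D finite differences operator. -/
theorem stmt2 (n : ℕ) [NeZero n] (hd : 64 ≤ n ^ 2) :
    ∃ X : Finset (EuclideanSpace ℝ (Fin n × Fin n)),
      ↑X ⊆ Ktwo n ∩ sphere (0 : EuclideanSpace ℝ (Fin n × Fin n)) 1 ∧
      Real.exp ((n ^ 2 : ℝ) / 64) ≤ (X.card : ℝ) ∧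
      ∀ x ∈ X, ∀ y ∈ X, x ≠ y → (1 / 2 : ℝ) ≤ ‖x - y‖ := by
  obtain ⟨X, ⟨hX, hsep⟩, hcard⟩ : ∃ X, IsKtwoPacking n X ∧ Real.exp ((n : ℝ) ^ 2 / 64) ≤ #X := by
    rcases le_or_gt n 19 with hsmall | hlarge
    · exact exists_packing_singletons (by nlinarith) hsmall
    · exact exists_packing_combs hlarge
  exact ⟨X, hX, hcard, hsep⟩
end

section
/- Let Z be a hypergeometric random variable counting the intersection size of a fixed set of size k with a uniformly random set of size k drawn from {1,...,p} (k ≤ p). Then for all t > 0, P(Z ≥ k²/p + t) ≤ exp(-2t²/(k·(1 - (k-1)/p))). -/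
open MeasureTheory Metric Set
open scoped ENNReal NNReal

/-!
Serfling's martingale argument, carried out on generating functions. Sample `r` of `r + s`
elements uniformly, `L` of them marked and `N` unmarked; the number `Z` of marked elements drawn
has `E x ^ Z = coeff_r ((1 + x X) ^ L (1 + X) ^ N) / C(r + s, r)`. Conditioning on whether the
first draw is marked (differentiating in `X`) reduces to samples of size `r - 1` from one element
less, with `s` unchanged. The conditional mean of `Z` then moves within an interval of length
`s / (r + s)`, so Hoeffding's lemma gives `E exp (θ (Z - E Z)) ≤ exp (θ² / 8 ∑_{i<r} (s / (i + s))²)`,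
and `∑_{i<r} (s / (i + s))² ≤ r (s + 1) / (r + s)`, which is `k (1 - (k - 1) / p)` for `r = L = k`,
`r + s = p`. The claim is the Chernoff bound for this sub-Gaussian variable.
-/

instance (p : ℕ) : MeasurableSpace (Finset (Fin p)) := ⊤

open Polynomial ProbabilityTheory Real

lemma two_point_exp_le {q : ℝ} (hq : q ∈ Icc 0 1) (u : ℝ) :
    q * exp ((1 - q) * u) + (1 - q) * exp (-(q * u)) ≤ exp (u ^ 2 / 8) := by
  have hoeffding := (hasSubgaussianMGF_of_mem_Icc (μ := Ber(true, false, ⟨q, hq⟩))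
    (X := fun b => if b then (1 : ℝ) else 0) (a := 0) (b := 1) (by fun_prop)
    (ae_of_all _ fun b => by cases b <;> simp)).mgf_le u
  simp only [mgf, integral_bernoulliMeasure] at hoeffding
  norm_num at hoeffding
  rw [mul_comm (1 - q), mul_comm q u]
  convert hoeffding using 2
  ring

-- Hoeffding's lemma for the first draw, which is marked with probability `L / (r + s + 1)`.
lemma mul_exp_add_mul_exp_le {θ r s L N : ℝ} (hr : 0 ≤ r) (hs : 0 < s) (hL : 0 ≤ L)
    (hN : 0 ≤ N) (hLN : L + N = r + s + 1) :
    L * exp (θ + θ * r * (L - 1) / (r + s)) + N * exp (θ * r * L / (r + s))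
      ≤ (r + s + 1) * exp (θ * (r + 1) * L / (r + s + 1) + θ ^ 2 / 8 * (s / (r + s)) ^ 2) := by
  set q := L / (r + s + 1) with hq
  set u := θ * s / (r + s)
  set a := θ * (r + 1) * L / (r + s + 1)
  have hq01 : q ∈ Icc 0 1 := ⟨by positivity, by rw [hq, div_le_one (by linarith)]; linarith⟩
  have hmarked : θ + θ * r * (L - 1) / (r + s) = a + (1 - q) * u := by
    simp only [a, q, u]
    field_simp
    ring
  have hunmarked : θ * r * L / (r + s) = a + -(q * u) := by
    simp only [a, q, u]
    field_simp
    ring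
  have hLq : L = (r + s + 1) * q := by
    simp only [q]
    field_simp
  have hNq : N = (r + s + 1) * (1 - q) := by
    simp only [q]
    field_simp
    linarith
  calc L * exp (θ + θ * r * (L - 1) / (r + s)) + N * exp (θ * r * L / (r + s))
      = (r + s + 1) * exp a * (q * exp ((1 - q) * u) + (1 - q) * exp (-(q * u))) := by
        rw [hmarked, hunmarked, exp_add, exp_add, hLq, hNq]
        ring
    _ ≤ (r + s + 1) * exp a * exp (u ^ 2 / 8) := by gcongr; exact two_point_exp_le hq01 u
    _ = _ := by
        rw [mul_assoc, ← exp_add]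
        congr 3
        ring

noncomputable def hypergeomPoly (L N : ℕ) (x : ℝ) : ℝ[X] := (1 + C x * X) ^ L * (1 + X) ^ N

lemma hypergeomPoly_eq_prod {α : Type*} [Fintype α] [DecidableEq α] (F : Finset α) (x : ℝ) :
    hypergeomPoly F.card Fᶜ.card x = ∏ a, (1 + C (if a ∈ F then x else 1) * X) := by
  simp only [apply_ite C, map_one, one_mul, apply_ite (fun c => 1 + c * X)]
  rw [Finset.prod_ite]
  simp [hypergeomPoly, Finset.prod_const, ← Finset.compl_filter]

lemma sum_powersetCard_pow_card_inter {α : Type*} [Fintype α] [DecidableEq α]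
    (F : Finset α) (r : ℕ) (x : ℝ) :
    ∑ S ∈ Finset.univ.powersetCard r, x ^ (F ∩ S).card
      = (hypergeomPoly F.card Fᶜ.card x).coeff r := by
  have hterm (S : Finset α) : ∏ a ∈ S, C (if a ∈ F then x else 1) * X
      = C (x ^ (F ∩ S).card) * X ^ S.card := by
    rw [Finset.prod_mul_distrib, ← map_prod, Finset.prod_ite_mem, Finset.prod_const,
      Finset.prod_const, Finset.inter_comm]
  rw [hypergeomPoly_eq_prod, Finset.prod_one_add, finsetSum_coeff]
  simp only [hterm, coeff_C_mul_X_pow]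
  rw [Finset.powersetCard_eq_filter, Finset.sum_filter]
  simp [eq_comm]

lemma coeff_succ_hypergeomPoly (L N r : ℕ) (x : ℝ) :
    (r + 1) * (hypergeomPoly L N x).coeff (r + 1)
      = L * x * (hypergeomPoly (L - 1) N x).coeff r
        + N * (hypergeomPoly L (N - 1) x).coeff r := by
  have hderiv : derivative (hypergeomPoly L N x)
      = C (L * x) * hypergeomPoly (L - 1) N x + C (N : ℝ) * hypergeomPoly L (N - 1) x := by
    simp only [hypergeomPoly, derivative_mul, derivative_pow, derivative_add, derivative_one,
      derivative_C, derivative_X, map_mul]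
    ring
  have := congrArg (coeff · r) hderiv
  simp only [coeff_derivative, coeff_add, coeff_C_mul] at this
  linarith

lemma coeff_hypergeomPoly_exp_le_sum_sq {s : ℕ} (hs : 0 < s) (θ : ℝ) (r L N : ℕ)
    (hLN : L + N = r + s) :
    (hypergeomPoly L N (exp θ)).coeff r
      ≤ (r + s).choose r * exp (θ * r * L / (r + s)
          + θ ^ 2 / 8 * ∑ i ∈ Finset.range r, ((s : ℝ) / (i + s)) ^ 2) := by
  induction r generalizing L N with
  | zero => simp [hypergeomPoly, coeff_zero_eq_eval_zero]
  | succ r ih =>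
    set W := θ ^ 2 / 8 * ∑ i ∈ Finset.range r, ((s : ℝ) / (i + s)) ^ 2
    set B := ((r + s).choose r : ℝ) * exp W
    have hmarked : (L : ℝ) * (hypergeomPoly (L - 1) N (exp θ)).coeff r
        ≤ L * (B * exp (θ * r * (L - 1) / (r + s))) := by
      rcases L.eq_zero_or_pos with rfl | hL
      · simp
      have := ih (L - 1) N (by omega)
      rw [Nat.cast_sub hL, Nat.cast_one, add_comm _ W, exp_add, ← mul_assoc] at this
      gcongr
    have hunmarked : (N : ℝ) * (hypergeomPoly L (N - 1) (exp θ)).coeff r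
        ≤ N * (B * exp (θ * r * L / (r + s))) := by
      rcases N.eq_zero_or_pos with rfl | hN
      · simp
      have := ih L (N - 1) (by omega)
      rw [add_comm _ W, exp_add, ← mul_assoc] at this
      gcongr
    have hchoose : ((r : ℝ) + s + 1) * (r + s).choose r = (r + 1) * (r + 1 + s).choose (r + 1) := by
      rw [Nat.add_right_comm r 1 s]
      exact_mod_cast (Nat.add_one_mul_choose_eq (r + s) r).trans (mul_comm _ _)
    have hexponent : W + (θ * (r + 1) * L / (r + s + 1) + θ ^ 2 / 8 * (s / (r + s)) ^ 2)
        = θ * (r + 1) * L / (r + 1 + s)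
          + θ ^ 2 / 8 * ∑ i ∈ Finset.range (r + 1), ((s : ℝ) / (i + s)) ^ 2 := by
      rw [Finset.sum_range_succ, add_right_comm (r : ℝ) 1 s]
      ring
    refine le_of_mul_le_mul_left ?_ (by positivity : (0 : ℝ) < r + 1)
    push_cast
    calc ((r : ℝ) + 1) * (hypergeomPoly L N (exp θ)).coeff (r + 1)
        ≤ B * (L * exp (θ + θ * r * (L - 1) / (r + s)) + N * exp (θ * r * L / (r + s))) := by
          rw [coeff_succ_hypergeomPoly, exp_add]
          linear_combination exp θ * hmarked + hunmarked
      _ ≤ B * ((r + s + 1)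
            * exp (θ * (r + 1) * L / (r + s + 1) + θ ^ 2 / 8 * (s / (r + s)) ^ 2)) := by
          gcongr
          exact mul_exp_add_mul_exp_le r.cast_nonneg (Nat.cast_pos.2 hs) L.cast_nonneg
            N.cast_nonneg (by exact_mod_cast (by omega : L + N = r + s + 1))
      _ = _ := by
          rw [← hexponent, ← mul_assoc (_ + 1 : ℝ), ← hchoose]
          simp only [B, exp_add]
          ring

lemma sum_range_div_add_sq_le {s : ℕ} (hs : 0 < s) (r : ℕ) :
    ∑ i ∈ Finset.range r, ((s : ℝ) / (i + s)) ^ 2 ≤ r * (s + 1) / (r + s) := by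
  induction r with
  | zero => simp
  | succ r ih =>
    have hs' : (1 : ℝ) ≤ s := by exact_mod_cast hs
    have hr : (0 : ℝ) ≤ r := r.cast_nonneg
    have hstep : (r : ℝ) * (s + 1) / (r + s) + (s / (r + s)) ^ 2
        ≤ (r + 1) * (s + 1) / (r + 1 + s) := by
      rw [div_pow, div_add_div _ _ (by positivity) (by positivity),
        div_le_div_iff₀ (by positivity) (by positivity)]
      nlinarith [mul_nonneg hr (by linarith : (0 : ℝ) ≤ s - 1), mul_nonneg (mul_nonneg hr hr) hr]
    rw [Finset.sum_range_succ]
    push_cast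
    linarith

lemma coeff_hypergeomPoly_exp_le {s : ℕ} (hs : 0 < s) (θ : ℝ) (r L N : ℕ)
    (hLN : L + N = r + s) :
    (hypergeomPoly L N (exp θ)).coeff r
      ≤ (r + s).choose r * exp (θ * r * L / (r + s) + θ ^ 2 / 8 * (r * (s + 1) / (r + s))) := by
  refine (coeff_hypergeomPoly_exp_le_sum_sq hs θ r L N hLN).trans ?_
  gcongr
  exact sum_range_div_add_sq_le hs r

lemma PMF.integral_uniformOfFinset {β : Type*} [Fintype β] [MeasurableSpace β]
    [MeasurableSingletonClass β] (s : Finset β) (hs : s.Nonempty) (f : β → ℝ) :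
    ∫ b, f b ∂(PMF.uniformOfFinset s hs).toMeasure = (s.card : ℝ)⁻¹ * ∑ b ∈ s, f b := by
  rw [PMF.integral_eq_sum, Finset.mul_sum, ← Finset.sum_subset s.subset_univ]
  · refine Finset.sum_congr rfl fun b hb => ?_
    simp [PMF.uniformOfFinset_apply, hb]
  · intro b _ hb
    simp [PMF.uniformOfFinset_apply, hb]

lemma mgf_card_inter_sub_eq {α : Type*} [Fintype α] [DecidableEq α]
    [MeasurableSpace (Finset α)] [MeasurableSingletonClass (Finset α)] (F : Finset α) (r : ℕ)
    (hne : (Finset.univ.powersetCard r).Nonempty) (c θ : ℝ) :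
    mgf (fun S => ((F ∩ S).card : ℝ) - c) (PMF.uniformOfFinset _ hne).toMeasure θ
      = ((Fintype.card α).choose r : ℝ)⁻¹ * exp (-(θ * c))
          * ∑ S ∈ Finset.univ.powersetCard r, exp θ ^ (F ∩ S).card := by
  rw [mgf, PMF.integral_uniformOfFinset, Finset.card_powersetCard, Finset.card_univ, mul_assoc]
  congr 1
  rw [Finset.mul_sum]
  refine Finset.sum_congr rfl fun S _ => ?_
  rw [← exp_nat_mul, ← exp_add]
  ring_nf

lemma mul_one_sub_div_nonneg {k p : ℕ} (hkp : k ≤ p) : 0 ≤ (k : ℝ) * (1 - (k - 1) / p) := by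
  have : ((k : ℝ) - 1) / p ≤ 1 :=
    div_le_one_of_le₀ (by linarith [(by exact_mod_cast hkp : (k : ℝ) ≤ p)]) p.cast_nonneg
  nlinarith [k.cast_nonneg (α := ℝ)]

lemma hasSubgaussianMGF_card_inter {p k : ℕ} (hkp : k ≤ p) {F : Finset (Fin p)}
    (hF : F.card = k) (hne : (Finset.univ.powersetCard k).Nonempty) :
    HasSubgaussianMGF (fun S => ((F ∩ S).card : ℝ) - k ^ 2 / p)
      (k * (1 - (k - 1) / p) / 4 : ℝ).toNNReal (PMF.uniformOfFinset _ hne).toMeasure where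
  integrable_exp_mul _ := .of_finite
  mgf_le θ := by
    have hD := mul_one_sub_div_nonneg hkp
    rw [mgf_card_inter_sub_eq, Fintype.card_fin, Real.coe_toNNReal _ (by positivity)]
    rcases hkp.lt_or_eq with hkp | rfl
    · obtain ⟨s, rfl⟩ := Nat.exists_eq_add_of_le hkp.le
      have hs : 0 < s := by omega
      have hC : ((k + s).choose k : ℝ) ≠ 0 := Nat.cast_ne_zero.2 (Nat.choose_pos (by omega)).ne'
      rw [sum_powersetCard_pow_card_inter, Finset.card_compl, Fintype.card_fin, hF,
        Nat.add_sub_cancel_left]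
      push_cast
      calc ((k + s).choose k : ℝ)⁻¹ * exp (-(θ * (k ^ 2 / (k + s))))
            * (hypergeomPoly k s (exp θ)).coeff k
          ≤ ((k + s).choose k : ℝ)⁻¹ * exp (-(θ * (k ^ 2 / (k + s))))
            * ((k + s).choose k
              * exp (θ * k * k / (k + s) + θ ^ 2 / 8 * (k * (s + 1) / (k + s)))) := by
            gcongr
            exact coeff_hypergeomPoly_exp_le hs θ k k s rfl
        _ = _ := by
            rw [mul_mul_mul_comm, inv_mul_cancel₀ hC, one_mul, ← exp_add]
            congr 1
            field_simp
            ring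
    · have huniv : Finset.univ.powersetCard k = {(Finset.univ : Finset (Fin k))} := by
        simpa using Finset.powersetCard_self (Finset.univ : Finset (Fin k))
      rw [huniv, Finset.sum_singleton, Finset.inter_univ, hF, Nat.choose_self, sq,
        mul_self_div_self, ← exp_nat_mul, Nat.cast_one, inv_one, one_mul, ← exp_add, mul_comm θ,
        neg_add_cancel, exp_zero]
      exact one_le_exp (by positivity)

theorem stmt15_general (p k : ℕ) (hkp : k ≤ p)
    (F : Finset (Fin p)) (hF : F.card = k)
    (hne : ((Finset.univ : Finset (Fin p)).powersetCard k).Nonempty)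
    (t : ℝ) (ht : 0 < t) :
    (PMF.uniformOfFinset _ hne).toMeasure
      {S : Finset (Fin p) | ((k : ℝ) ^ 2 / p + t) ≤ ((F ∩ S).card : ℝ)}
      ≤ ENNReal.ofReal
          (Real.exp (-(2 * t ^ 2) / ((k : ℝ) * (1 - ((k : ℝ) - 1) / p)))) := by
  have htail := (hasSubgaussianMGF_card_inter hkp hF hne).measure_ge_le ht.le
  rw [Real.coe_toNNReal _ (by linarith [mul_one_sub_div_nonneg hkp])] at htail
  have hevent : {S : Finset (Fin p) | ((k : ℝ) ^ 2 / p + t) ≤ ((F ∩ S).card : ℝ)}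
      = {S | t ≤ ((F ∩ S).card : ℝ) - k ^ 2 / p} := by
    ext S
    simp [le_sub_iff_add_le']
  rw [hevent, ← ofReal_measureReal]
  refine ENNReal.ofReal_le_ofReal (htail.trans_eq ?_)
  generalize (k : ℝ) * (1 - ((k : ℝ) - 1) / p) = D
  congr 1
  ring

/-- Serfling's inequality for hypergeometric sampling: if `Z` is the size of
the intersection of a fixed `k`-set `F ⊆ {1,…,p}` with a uniformly random `k`-set, then
`P(Z ≥ k²/p + t) ≤ exp(-2t²/(k(1-(k-1)/p)))` for all `t > 0`. -/
theorem stmt15 (p k : ℕ) (hp : 0 < p) (hkp : k ≤ p)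
    (F : Finset (Fin p)) (hF : F.card = k)
    (hne : ((Finset.univ : Finset (Fin p)).powersetCard k).Nonempty)
    (t : ℝ) (ht : 0 < t) :
    (PMF.uniformOfFinset _ hne).toMeasure
      {S : Finset (Fin p) | ((k : ℝ) ^ 2 / p + t) ≤ ((F ∩ S).card : ℝ)}
      ≤ ENNReal.ofReal
          (Real.exp (-(2 * t ^ 2) / ((k : ℝ) * (1 - ((k : ℝ) - 1) / p)))) :=
  stmt15_general p k hkp F hF hne t ht
end
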